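/- arXiv:2505.04807 — 6 statements merged into one kernel-verified Lean document; each statement's English description precedes it below -/
import Mathlib

section
/- Let H be a symmetric n×n real matrix, g ∈ ℝⁿ, σ > 0, μ ≥ 0, and s, r ∈ ℝⁿ with r = (H + (σ^{1/2}‖g‖ + μ)·I)s + g. Suppose sᵀ(H + μ·I)s ≥ 0 and rᵀs = 0. Then gᵀs + ½ sᵀHs ≤ −σ^{1/2}‖g‖‖s‖². -/
open RealInnerProductSpace

section RegularizedNewtonStep

variable {E : Type*} [NormedAddCommGroup E] [InnerProductSpace ℝ E]

theorem inner_eq_of_inner_residual_eq_zero (H : E → E) (g s : E) (c : ℝ)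
    (horth : ⟪H s + c • s + g, s⟫ = 0) :
    ⟪g, s⟫ = -⟪s, H s⟫ - c * ‖s‖ ^ 2 := by
  rw [inner_add_left, inner_add_left, real_inner_smul_left, real_inner_self_eq_norm_sq,
    real_inner_comm] at horth
  linarith

/-- Writing `⟪g, s⟫ + ½⟪s, H s⟫ = -ρ‖s‖² - ½(⟪s, H s⟫ + μ‖s‖²) - ½μ‖s‖²`, both subtracted
terms are nonnegative. -/
theorem inner_add_half_inner_le_of_inner_residual_eq_zero (H : E → E) (g s : E) {ρ μ : ℝ}
    (hμ : 0 ≤ μ) (hpos : 0 ≤ ⟪s, H s⟫ + μ * ‖s‖ ^ 2)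
    (horth : ⟪H s + (ρ + μ) • s + g, s⟫ = 0) :
    ⟪g, s⟫ + 1 / 2 * ⟪s, H s⟫ ≤ -(ρ * ‖s‖ ^ 2) := by
  have hμs : 0 ≤ μ * ‖s‖ ^ 2 := by positivity
  rw [inner_eq_of_inner_residual_eq_zero H g s _ horth]
  linarith

end RegularizedNewtonStep

theorem stmt_3_general {n : ℕ}
    (H : EuclideanSpace ℝ (Fin n) →L[ℝ] EuclideanSpace ℝ (Fin n))
    (g s r : EuclideanSpace ℝ (Fin n)) (σ μ : ℝ) (hμ : 0 ≤ μ)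
    (hr : r = H s + (Real.sqrt σ * ‖g‖ + μ) • s + g)
    (hpos : 0 ≤ (inner ℝ s (H s) : ℝ) + μ * ‖s‖ ^ 2)
    (horth : (inner ℝ r s : ℝ) = 0) :
    (inner ℝ g s : ℝ) + (1 / 2) * (inner ℝ s (H s) : ℝ)
      ≤ -(Real.sqrt σ * ‖g‖ * ‖s‖ ^ 2) := by
  subst hr
  exact inner_add_half_inner_le_of_inner_residual_eq_zero H g s hμ hpos horth

/-- Quadratic model decrease achieved by the doubly regularized Newton step. -/
theorem stmt_3 {n : ℕ}
    (H : EuclideanSpace ℝ (Fin n) →L[ℝ] EuclideanSpace ℝ (Fin n))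
    (hH : ∀ x y : EuclideanSpace ℝ (Fin n), (inner ℝ (H x) y : ℝ) = (inner ℝ x (H y) : ℝ))
    (g s r : EuclideanSpace ℝ (Fin n)) (σ μ : ℝ) (hσ : 0 < σ) (hμ : 0 ≤ μ)
    (hr : r = H s + (Real.sqrt σ * ‖g‖ + μ) • s + g)
    (hpos : 0 ≤ (inner ℝ s (H s) : ℝ) + μ * ‖s‖ ^ 2)
    (horth : (inner ℝ r s : ℝ) = 0) :
    (inner ℝ g s : ℝ) + (1 / 2) * (inner ℝ s (H s) : ℝ)
      ≤ -(Real.sqrt σ * ‖g‖ * ‖s‖ ^ 2) :=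
  stmt_3_general H g s r σ μ hμ hr hpos horth
end

section
/- Let H be a symmetric n×n real matrix, g ∈ ℝⁿ, and let σ > 0, θ ∈ (0,1], κ_C ≥ 1, μ > 0 with μ > κ_C σ^{1/2}‖g‖. Let u ∈ ℝⁿ satisfy gᵀu ≤ 0, ‖u‖ = 1, uᵀHu ≤ −θμ, and set s = (θκ_C/σ^{1/2})u. Then gᵀs + ½ sᵀHs ≤ −(1/2)θ³κ_C³‖g‖/σ^{1/2} = −(1/2)σ‖g‖‖s‖³. -/
/-!
Along `s = t • u` with `t = θ κC / √σ ≥ 0` the model is `t ⟪g, u⟫ + (t² / 2) ⟪u, H u⟫`. The first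
term is nonpositive, and since `μ > κC √σ ‖g‖` the curvature bound gives
`⟪u, H u⟫ ≤ -θ κC √σ ‖g‖`, so the model is at most `-(t² / 2) θ κC √σ ‖g‖ = -θ³ κC³ ‖g‖ / (2 √σ)`.
As `‖s‖ = t`, this equals `-(σ / 2) ‖g‖ ‖s‖³`.
-/

open scoped RealInnerProductSpace

section QuadraticModel

variable {E : Type*} [NormedAddCommGroup E] [InnerProductSpace ℝ E]

lemma inner_add_half_inner_map_smul (H : E →ₗ[ℝ] E) (g u : E) (t : ℝ) :
    ⟪g, t • u⟫ + 1 / 2 * ⟪t • u, H (t • u)⟫ = t * ⟪g, u⟫ + t ^ 2 / 2 * ⟪u, H u⟫ := by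
  rw [map_smul, real_inner_smul_right, real_inner_smul_left, real_inner_smul_right]
  ring

lemma inner_add_half_inner_map_smul_le (H : E →ₗ[ℝ] E) {g u : E} {t c : ℝ} (ht : 0 ≤ t)
    (hgu : ⟪g, u⟫ ≤ 0) (hcurv : ⟪u, H u⟫ ≤ -c) :
    ⟪g, t • u⟫ + 1 / 2 * ⟪t • u, H (t • u)⟫ ≤ -(t ^ 2 * c / 2) := by
  rw [inner_add_half_inner_map_smul]
  have hdescent : t * ⟪g, u⟫ ≤ 0 := mul_nonpos_of_nonneg_of_nonpos ht hgu
  have hcurvature : t ^ 2 / 2 * ⟪u, H u⟫ ≤ t ^ 2 / 2 * -c :=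
    mul_le_mul_of_nonneg_left hcurv (by positivity)
  linarith

end QuadraticModel

section DivisionIdentities

variable {K : Type*} [Field K]

lemma div_pow_two_mul_self (a b : K) : (a / b) ^ 2 * b = a ^ 2 / b := by
  rcases eq_or_ne b 0 with rfl | hb
  · simp
  · field_simp

lemma pow_two_mul_div_pow_three (a b : K) : b ^ 2 * (a / b) ^ 3 = a ^ 3 / b := by
  rcases eq_or_ne b 0 with rfl | hb
  · simp
  · field_simp

end DivisionIdentities

lemma Real.mul_div_sqrt_pow_three (σ a : ℝ) : σ * (a / √σ) ^ 3 = a ^ 3 / √σ := by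
  rcases le_or_gt σ 0 with hσ | hσ
  · simp [Real.sqrt_eq_zero'.mpr hσ]
  · rw [← pow_two_mul_div_pow_three, Real.sq_sqrt hσ.le]

theorem stmt_4_general {n : ℕ}
    (H : EuclideanSpace ℝ (Fin n) →L[ℝ] EuclideanSpace ℝ (Fin n))
    (g u s : EuclideanSpace ℝ (Fin n)) (σ θ κC μ : ℝ)
    (hθ : 0 < θ) (hκC : 1 ≤ κC)
    (hμbig : κC * Real.sqrt σ * ‖g‖ < μ)
    (hgu : (inner ℝ g u : ℝ) ≤ 0) (hu : ‖u‖ = 1)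
    (hcurv : (inner ℝ u (H u) : ℝ) ≤ -(θ * μ))
    (hs : s = (θ * κC / Real.sqrt σ) • u) :
    (inner ℝ g s : ℝ) + (1 / 2) * (inner ℝ s (H s) : ℝ)
        ≤ -((1 / 2) * θ ^ 3 * κC ^ 3 * ‖g‖ / Real.sqrt σ) ∧
      -((1 / 2) * θ ^ 3 * κC ^ 3 * ‖g‖ / Real.sqrt σ)
        = -((1 / 2) * σ * ‖g‖ * ‖s‖ ^ 3) := by
  set t := θ * κC / √σ
  have ht : 0 ≤ t := by positivity
  have hnorm : ‖s‖ = t := by rw [hs, norm_smul, hu, mul_one, Real.norm_of_nonneg ht]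
  have hcurv' : ⟪u, H u⟫ ≤ -(θ * (κC * √σ * ‖g‖)) :=
    hcurv.trans (neg_le_neg (mul_le_mul_of_nonneg_left hμbig.le hθ.le))
  constructor
  · calc ⟪g, s⟫ + 1 / 2 * ⟪s, H s⟫ ≤ -(t ^ 2 * (θ * (κC * √σ * ‖g‖)) / 2) := by
          rw [hs]; exact inner_add_half_inner_map_smul_le H.toLinearMap ht hgu hcurv'
      _ = -(1 / 2 * θ ^ 3 * κC ^ 3 * ‖g‖ / √σ) := by
          have ht_sq : t ^ 2 * √σ = (θ * κC) ^ 2 / √σ := div_pow_two_mul_self _ _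
          linear_combination -(θ * κC * ‖g‖ / 2) * ht_sq
  · have ht_cube : σ * t ^ 3 = (θ * κC) ^ 3 / √σ := Real.mul_div_sqrt_pow_three _ _
    rw [hnorm]
    linear_combination ‖g‖ / 2 * ht_cube

/-- Quadratic model decrease achieved by the scaled negative curvature step. -/
theorem stmt_4 {n : ℕ}
    (H : EuclideanSpace ℝ (Fin n) →L[ℝ] EuclideanSpace ℝ (Fin n))
    (hH : ∀ x y : EuclideanSpace ℝ (Fin n), (inner ℝ (H x) y : ℝ) = (inner ℝ x (H y) : ℝ))
    (g u s : EuclideanSpace ℝ (Fin n)) (σ θ κC μ : ℝ)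
    (hσ : 0 < σ) (hθ : 0 < θ) (hθ1 : θ ≤ 1) (hκC : 1 ≤ κC)
    (hμ : 0 < μ) (hμbig : κC * Real.sqrt σ * ‖g‖ < μ)
    (hgu : (inner ℝ g u : ℝ) ≤ 0) (hu : ‖u‖ = 1)
    (hcurv : (inner ℝ u (H u) : ℝ) ≤ -(θ * μ))
    (hs : s = (θ * κC / Real.sqrt σ) • u) :
    (inner ℝ g s : ℝ) + (1 / 2) * (inner ℝ s (H s) : ℝ)
        ≤ -((1 / 2) * θ ^ 3 * κC ^ 3 * ‖g‖ / Real.sqrt σ) ∧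
      -((1 / 2) * θ ^ 3 * κC ^ 3 * ‖g‖ / Real.sqrt σ)
        = -((1 / 2) * σ * ‖g‖ * ‖s‖ ^ 3) :=
  stmt_4_general H g u s σ θ κC μ hθ hκC hμbig hgu hu hcurv hs
end

section
/- Let f : ℝⁿ → ℝ be C² satisfying the local Hessian Lipschitz condition with constants L₀, L₁ ≥ 0 and radius δ > 0. Let x, g = ∇f(x), H = ∇²f(x), σ > 0, μ with 0 ≤ μ ≤ κ_C σ^{1/2}‖g‖ for some κ_C ≥ 1, and suppose s satisfies ‖s‖ ≤ min(δ, 1/σ^{1/2}) and ‖(H + (σ^{1/2}‖g‖ + μ)I)s + g‖ ≤ κ_θ‖g‖ for some κ_θ ≥ 0. Then ‖∇f(x+s)‖ ≤ ((L₀/‖g‖ + L₁)/(2σ) + 1 + κ_C + κ_θ)·‖g‖, provided g ≠ 0. -/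
/-!
Writing `c = √σ ‖g‖ + μ`, the new gradient splits as
`∇f(x+s) = (∇f(x+s) - g - H s) + (H s + c s + g) - c s`.
The first term is a Taylor remainder, at most `(L₀ + L₁‖g‖)/2 · ‖s‖² ≤ (L₀ + L₁‖g‖)/(2σ)` by the
local Hessian Lipschitz bound and `‖s‖ ≤ σ^{-1/2}`; the second is the Newton residual, at most
`κθ ‖g‖`; the third has norm `c ‖s‖ ≤ (1 + κC) ‖g‖`.
-/

open Set Metric

theorem ContDiff.gradient {F : Type*} [NormedAddCommGroup F] [InnerProductSpace ℝ F]
    [CompleteSpace F] {f : F → ℝ} {n : WithTop ℕ∞} (hf : ContDiff ℝ (n + 1) f) :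
    ContDiff ℝ n (gradient f) :=
  (InnerProductSpace.toDual ℝ F).symm.contDiff.comp (hf.fderiv_right le_rfl)

section Taylor

variable {E F : Type*} [NormedAddCommGroup E] [NormedSpace ℝ E]
  [NormedAddCommGroup F] [NormedSpace ℝ F] {G : E → F} {x s : E} {K : ℝ}

/- Compare `φ t = G (x + t s) - G x - t G'(x) s` with the barrier `K ‖s‖² t² / 2`, whose
derivative dominates `‖φ' t‖`. -/
theorem norm_image_add_sub_sub_fderiv_le_of_segment (hG : Differentiable ℝ G)
    (hK : ∀ t ∈ Icc (0 : ℝ) 1, ‖fderiv ℝ G (x + t • s) - fderiv ℝ G x‖ ≤ K * (t * ‖s‖)) :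
    ‖G (x + s) - G x - fderiv ℝ G x s‖ ≤ K / 2 * ‖s‖ ^ 2 := by
  set φ : ℝ → F := fun t => G (x + t • s) - G x - t • fderiv ℝ G x s
  have hφ : ∀ t, HasDerivAt φ (fderiv ℝ G (x + t • s) s - fderiv ℝ G x s) t := by
    intro t
    have hline : HasDerivAt (fun t : ℝ => x + t • s) s t := by
      simpa using ((hasDerivAt_id t).smul_const s).const_add x
    exact (((hG _).hasFDerivAt.comp_hasDerivAt t hline).sub_const (G x)).sub
      (by simpa using (hasDerivAt_id t).smul_const (fderiv ℝ G x s))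
  have hB : ∀ t, HasDerivAt (fun t => K / 2 * ‖s‖ ^ 2 * t ^ 2) (K * ‖s‖ ^ 2 * t) t := fun t =>
    ((hasDerivAt_pow 2 t).const_mul (K / 2 * ‖s‖ ^ 2)).congr_deriv (by push_cast; ring)
  have hbound : ∀ t ∈ Ico (0 : ℝ) 1,
      ‖fderiv ℝ G (x + t • s) s - fderiv ℝ G x s‖ ≤ K * ‖s‖ ^ 2 * t := fun t ht =>
    calc ‖fderiv ℝ G (x + t • s) s - fderiv ℝ G x s‖
        ≤ ‖fderiv ℝ G (x + t • s) - fderiv ℝ G x‖ * ‖s‖ :=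
          (fderiv ℝ G (x + t • s) - fderiv ℝ G x).le_opNorm s
      _ ≤ K * (t * ‖s‖) * ‖s‖ := by gcongr; exact hK t (Ico_subset_Icc_self ht)
      _ = K * ‖s‖ ^ 2 * t := by ring
  simpa [φ] using image_norm_le_of_norm_deriv_right_le_deriv_boundary
    (fun t _ => (hφ t).continuousAt.continuousWithinAt) (fun t _ => (hφ t).hasDerivWithinAt)
    (by simp [φ]) hB hbound (right_mem_Icc.2 zero_le_one)

theorem norm_image_add_sub_sub_fderiv_le (hG : Differentiable ℝ G) {δ : ℝ} (hs : ‖s‖ ≤ δ)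
    (hK : ∀ y ∈ closedBall x δ, ‖fderiv ℝ G y - fderiv ℝ G x‖ ≤ K * dist y x) :
    ‖G (x + s) - G x - fderiv ℝ G x s‖ ≤ K / 2 * ‖s‖ ^ 2 := by
  refine norm_image_add_sub_sub_fderiv_le_of_segment hG fun t ht => ?_
  have hdist : dist (x + t • s) x = t * ‖s‖ := by
    rw [dist_eq_norm, add_sub_cancel_left, norm_smul, Real.norm_of_nonneg ht.1]
  rw [← hdist]
  refine hK _ (mem_closedBall.2 ?_)
  rw [hdist]
  exact (mul_le_of_le_one_left (norm_nonneg s) ht.2).trans hs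

end Taylor

section StepLength

variable {σ r : ℝ}

theorem mul_sq_le_div_of_le_one_div_sqrt {K : ℝ} (hK : 0 ≤ K) (hσ : 0 < σ) (hr0 : 0 ≤ r)
    (hr : r ≤ 1 / Real.sqrt σ) : K * r ^ 2 ≤ K / σ :=
  calc K * r ^ 2 ≤ K * (1 / Real.sqrt σ) ^ 2 := by gcongr
    _ = K / σ := by rw [div_pow, Real.sq_sqrt hσ.le]; ring

theorem sqrt_mul_add_mul_le_of_le_one_div_sqrt {a μ κ : ℝ} (hσ : 0 < σ) (ha : 0 ≤ a)
    (hμ0 : 0 ≤ μ) (hμ : μ ≤ κ * Real.sqrt σ * a) (hr0 : 0 ≤ r) (hr : r ≤ 1 / Real.sqrt σ) :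
    (Real.sqrt σ * a + μ) * r ≤ (1 + κ) * a := by
  have hsqrt : 0 < Real.sqrt σ := Real.sqrt_pos.2 hσ
  have hc : 0 ≤ Real.sqrt σ * a + μ := by positivity
  calc (Real.sqrt σ * a + μ) * r ≤ ((1 + κ) * Real.sqrt σ * a) * (1 / Real.sqrt σ) :=
        mul_le_mul (by linarith) hr hr0 (by linarith)
    _ = (1 + κ) * a := by field_simp

end StepLength

theorem stmt_6_general {n : ℕ} (f : EuclideanSpace ℝ (Fin n) → ℝ)
    (hf : ContDiff ℝ 2 f) (L₀ L₁ δ : ℝ) (hL₀ : 0 ≤ L₀) (hL₁ : 0 ≤ L₁)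
    (hLip : ∀ x y : EuclideanSpace ℝ (Fin n), ‖x - y‖ ≤ δ →
      ‖fderiv ℝ (gradient f) y - fderiv ℝ (gradient f) x‖
        ≤ (L₀ + L₁ * ‖gradient f x‖) * ‖x - y‖)
    (x s : EuclideanSpace ℝ (Fin n)) (σ μ κC κθ : ℝ)
    (hσ : 0 < σ)
    (hμ0 : 0 ≤ μ) (hμ : μ ≤ κC * Real.sqrt σ * ‖gradient f x‖)
    (hsδ : ‖s‖ ≤ min δ (1 / Real.sqrt σ))
    (hres : ‖fderiv ℝ (gradient f) x s
        + (Real.sqrt σ * ‖gradient f x‖ + μ) • s + gradient f x‖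
        ≤ κθ * ‖gradient f x‖)
    (hg : gradient f x ≠ 0) :
    ‖gradient f (x + s)‖
      ≤ ((L₀ / ‖gradient f x‖ + L₁) / (2 * σ) + 1 + κC + κθ) * ‖gradient f x‖ := by
  set g := gradient f x
  set H := fderiv ℝ (gradient f) x
  set c := Real.sqrt σ * ‖g‖ + μ
  obtain ⟨hs, hsσ⟩ := le_min_iff.1 hsδ
  have hc : 0 ≤ c := by positivity
  have htaylor : ‖gradient f (x + s) - g - H s‖ ≤ (L₀ + L₁ * ‖g‖) / 2 * ‖s‖ ^ 2 :=
    norm_image_add_sub_sub_fderiv_le ((hf.gradient (n := 1)).differentiable one_ne_zero) hs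
      fun y hy => by
        rw [dist_eq_norm']
        exact hLip x y (by rwa [mem_closedBall, dist_eq_norm'] at hy)
  have hquad : (L₀ + L₁ * ‖g‖) / 2 * ‖s‖ ^ 2 ≤ (L₀ + L₁ * ‖g‖) / (2 * σ) := by
    rw [← div_div]
    exact mul_sq_le_div_of_le_one_div_sqrt (by positivity) hσ (norm_nonneg s) hsσ
  have hshift : c * ‖s‖ ≤ (1 + κC) * ‖g‖ :=
    sqrt_mul_add_mul_le_of_le_one_div_sqrt hσ (norm_nonneg g) hμ0 hμ (norm_nonneg s) hsσ
  calc ‖gradient f (x + s)‖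
        = ‖(gradient f (x + s) - g - H s) + (H s + c • s + g) - c • s‖ := by congr 1; abel
    _ ≤ ‖gradient f (x + s) - g - H s‖ + ‖H s + c • s + g‖ + ‖c • s‖ :=
        (norm_sub_le _ _).trans (add_le_add_left (norm_add_le _ _) _)
    _ ≤ (L₀ + L₁ * ‖g‖) / (2 * σ) + κθ * ‖g‖ + (1 + κC) * ‖g‖ := by
        rw [norm_smul, Real.norm_of_nonneg hc]
        gcongr
        exact htaylor.trans hquad
    _ = ((L₀ / ‖g‖ + L₁) / (2 * σ) + 1 + κC + κθ) * ‖g‖ := by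
        field_simp [norm_ne_zero_iff.2 hg]
        ring

/-- Bound on the gradient norm at the trial point after an inexact regularized
Newton step, under the local Hessian Lipschitz condition. -/
theorem stmt_6 {n : ℕ} (f : EuclideanSpace ℝ (Fin n) → ℝ)
    (hf : ContDiff ℝ 2 f) (L₀ L₁ δ : ℝ) (hL₀ : 0 ≤ L₀) (hL₁ : 0 ≤ L₁) (hδ : 0 < δ)
    (hLip : ∀ x y : EuclideanSpace ℝ (Fin n), ‖x - y‖ ≤ δ →
      ‖fderiv ℝ (gradient f) y - fderiv ℝ (gradient f) x‖
        ≤ (L₀ + L₁ * ‖gradient f x‖) * ‖x - y‖)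
    (x s : EuclideanSpace ℝ (Fin n)) (σ μ κC κθ : ℝ)
    (hσ : 0 < σ) (hκC : 1 ≤ κC) (hκθ : 0 ≤ κθ)
    (hμ0 : 0 ≤ μ) (hμ : μ ≤ κC * Real.sqrt σ * ‖gradient f x‖)
    (hsδ : ‖s‖ ≤ min δ (1 / Real.sqrt σ))
    (hres : ‖fderiv ℝ (gradient f) x s
        + (Real.sqrt σ * ‖gradient f x‖ + μ) • s + gradient f x‖
        ≤ κθ * ‖gradient f x‖)
    (hg : gradient f x ≠ 0) :
    ‖gradient f (x + s)‖
      ≤ ((L₀ / ‖gradient f x‖ + L₁) / (2 * σ) + 1 + κC + κθ) * ‖gradient f x‖ :=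
  stmt_6_general f hf L₀ L₁ δ hL₀ hL₁ hLip x s σ μ κC κθ hσ hμ0 hμ hsδ hres hg
end

section
/- Let (σ_k) be a sequence of positive reals with σ_0 > 0, let 0 < γ₁ < 1 < γ₂, and let S ⊆ {0,…,k−1} be the set of 'successful' indices. Suppose σ_{i+1} ≥ γ₁σ_i for i ∈ S and σ_{i+1} ≥ γ₂σ_i for i ∉ S, and suppose σ_i ≤ σ_max for all i ≤ k. Then k ≤ |S|·(1 + |log γ₁|/log γ₂) + (1/log γ₂)·log(σ_max/σ_0). -/
/-!
Each step multiplies `σ` by at least `γ₁` (successful index) or `γ₂` (otherwise), so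
`σ₀ γ₁^a γ₂^(k-a) ≤ σ_k ≤ σ_max`, where `a ≤ |S|` counts the successful indices below `k`.
Taking logarithms and dividing by `log γ₂ > 0` gives the bound.
-/

open Finset Real

theorem mul_prod_range_le_of_mul_le_succ {R : Type*} [CommSemiring R] [PartialOrder R]
    [IsOrderedRing R] (σ c : ℕ → R) (n : ℕ) (hc : ∀ i < n, 0 ≤ c i)
    (h : ∀ i < n, c i * σ i ≤ σ (i + 1)) :
    σ 0 * ∏ i ∈ range n, c i ≤ σ n := by
  induction n with
  | zero => simp
  | succ n ih =>
    calc σ 0 * ∏ i ∈ range (n + 1), c i = c n * (σ 0 * ∏ i ∈ range n, c i) := by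
          rw [prod_range_succ]; ring
      _ ≤ c n * σ n := by
          gcongr
          · exact hc n n.lt_succ_self
          · exact ih (fun i hi => hc i (by omega)) (fun i hi => h i (by omega))
      _ ≤ σ (n + 1) := h n n.lt_succ_self

theorem natCast_add_le_of_mul_pow_mul_pow_le {σ₀ γ₁ γ₂ M : ℝ} {a b : ℕ}
    (hσ₀ : 0 < σ₀) (hγ₁ : 0 < γ₁) (hγ₂ : 1 < γ₂) (h : σ₀ * γ₁ ^ a * γ₂ ^ b ≤ M) :
    ((a + b : ℕ) : ℝ) ≤ a * (1 + |log γ₁| / log γ₂) + 1 / log γ₂ * log (M / σ₀) := by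
  have hlog₂ : 0 < log γ₂ := log_pos hγ₂
  have hpos : 0 < σ₀ * γ₁ ^ a * γ₂ ^ b := by positivity
  have hlog : log σ₀ + a * log γ₁ + b * log γ₂ ≤ log M := by
    have := log_le_log hpos h
    rwa [log_mul (by positivity) (by positivity), log_mul (by positivity) (by positivity),
      log_pow, log_pow] at this
  have hb : (b : ℝ) ≤ (a * |log γ₁| + (log M - log σ₀)) / log γ₂ := by
    rw [le_div_iff₀ hlog₂]
    nlinarith [neg_abs_le (log γ₁), (a.cast_nonneg : (0 : ℝ) ≤ a)]
  calc ((a + b : ℕ) : ℝ) = a + b := Nat.cast_add a b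
    _ ≤ a + (a * |log γ₁| + (log M - log σ₀)) / log γ₂ := by gcongr
    _ = a * (1 + |log γ₁| / log γ₂) + 1 / log γ₂ * log (M / σ₀) := by
      rw [log_div (hpos.trans_le h).ne' hσ₀.ne']
      field_simp
      ring

theorem stmt_9_general (σ : ℕ → ℝ) (k : ℕ) (γ₁ γ₂ σmax : ℝ) (S : Finset ℕ)
    (hσpos : ∀ i, 0 < σ i)
    (hγ₁ : 0 < γ₁) (hγ₂ : 1 < γ₂)
    (hsucc : ∀ i ∈ Finset.range k, i ∈ S → γ₁ * σ i ≤ σ (i + 1))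
    (hfail : ∀ i ∈ Finset.range k, i ∉ S → γ₂ * σ i ≤ σ (i + 1))
    (hmax : ∀ i ≤ k, σ i ≤ σmax) :
    (k : ℝ) ≤ S.card * (1 + |Real.log γ₁| / Real.log γ₂)
      + (1 / Real.log γ₂) * Real.log (σmax / σ 0) := by
  set succs := (range k).filter (· ∈ S)
  set fails := (range k).filter (· ∉ S)
  have hgrowth : σ 0 * (γ₁ ^ #succs * γ₂ ^ #fails) ≤ σ k := by
    rw [← prod_const, ← prod_const, ← prod_ite]
    refine mul_prod_range_le_of_mul_le_succ σ _ k (fun i _ => ?_) (fun i hi => ?_)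
    · split_ifs <;> positivity
    · have hi := mem_range.2 hi
      split_ifs with hiS
      exacts [hsucc i hi hiS, hfail i hi hiS]
  have hk : #succs + #fails = k := by
    rw [card_filter_add_card_filter_not, card_range]
  have hsuccS : (#succs : ℝ) ≤ #S := by
    exact_mod_cast card_le_card fun i hi => (mem_filter.1 hi).2
  have hcoeff : 0 ≤ 1 + |log γ₁| / log γ₂ := by
    have := log_pos hγ₂
    positivity
  calc (k : ℝ) = ((#succs + #fails : ℕ) : ℝ) := by rw [hk]
    _ ≤ #succs * (1 + |log γ₁| / log γ₂) + 1 / log γ₂ * log (σmax / σ 0) :=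
      natCast_add_le_of_mul_pow_mul_pow_le (hσpos 0) hγ₁ hγ₂
        (by rw [mul_assoc]; exact hgrowth.trans (hmax k le_rfl))
    _ ≤ #S * (1 + |log γ₁| / log γ₂) + 1 / log γ₂ * log (σmax / σ 0) := by gcongr

/-- Bound on the total number of iterations of an adaptive regularization method
in terms of the number of successful ones. -/
theorem stmt_9 (σ : ℕ → ℝ) (k : ℕ) (γ₁ γ₂ σmax : ℝ) (S : Finset ℕ)
    (hσpos : ∀ i, 0 < σ i)
    (hγ₁ : 0 < γ₁) (hγ₁1 : γ₁ < 1) (hγ₂ : 1 < γ₂)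
    (hS : S ⊆ Finset.range k)
    (hsucc : ∀ i ∈ Finset.range k, i ∈ S → γ₁ * σ i ≤ σ (i + 1))
    (hfail : ∀ i ∈ Finset.range k, i ∉ S → γ₂ * σ i ≤ σ (i + 1))
    (hmax : ∀ i ≤ k, σ i ≤ σmax) :
    (k : ℝ) ≤ S.card * (1 + |Real.log γ₁| / Real.log γ₂)
      + (1 / Real.log γ₂) * Real.log (σmax / σ 0) :=
  stmt_9_general σ k γ₁ γ₂ σmax S hσpos hγ₁ hγ₂ hsucc hfail hmax
end

section
/- Let (g_i)_{i=0}^{k} be a sequence of nonzero vectors in ℝⁿ, ε ∈ (0,1], and suppose the index set {0,…,k−1} is partitioned into three sets A, B, C such that ‖g_{i+1}‖ ≤ (K_A/ε)‖g_i‖ for i ∈ A, ‖g_{i+1}‖ ≤ ‖g_i‖/2 for i ∈ B, and ‖g_{i+1}‖ ≤ (K_C/ε)‖g_i‖ for i ∈ C, where K_A, K_C ≥ 1. If ‖g_k‖ ≥ ε, then |B| ≤ (|A|/log 2)·log(K_A/ε) + (|C|/log 2)·log(K_C/ε) + (|log ε| + log‖g_0‖)/log 2. -/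
/-!
Along the run, `log ‖g i‖` rises by at most `log (K_A/ε)` on an A-step and `log (K_C/ε)` on a
C-step, and falls by at least `log 2` on a B-step. Telescoping over `0, …, k` and using
`log ε ≤ log ‖g k‖` bounds `|B| log 2` by the total possible rise plus `log ‖g 0‖ - log ε`.
-/

open Finset Real

lemma log_sub_log_le_log_of_le_mul {x y K : ℝ} (hx : 0 < x) (hy : 0 < y) (h : y ≤ K * x) :
    log y - log x ≤ log K := by
  have hK : 0 < K := pos_of_mul_pos_left (hy.trans_le h) hx.le
  have := log_le_log hy h
  rw [log_mul hK.ne' hx.ne'] at this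
  linarith

section LogIncrements

variable {a : ℕ → ℝ} {k : ℕ}

lemma sum_log_increments_le_card_mul {S : Finset ℕ} {K : ℝ} (hpos : ∀ i ≤ k, 0 < a i)
    (hS : ∀ i ∈ S, i < k) (h : ∀ i ∈ S, a (i + 1) ≤ K * a i) :
    ∑ i ∈ S, (log (a (i + 1)) - log (a i)) ≤ #S * log K := by
  rw [← nsmul_eq_mul]
  exact sum_le_card_nsmul _ _ _ fun i hi =>
    log_sub_log_le_log_of_le_mul (hpos i (hS i hi).le) (hpos (i + 1) (hS i hi)) (h i hi)

lemma card_mul_log_two_le {KA KC : ℝ} {A B C : Finset ℕ} (hpos : ∀ i ≤ k, 0 < a i)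
    (hAB : Disjoint A B) (hAC : Disjoint A C) (hBC : Disjoint B C)
    (hpart : A ∪ B ∪ C = range k)
    (hA : ∀ i ∈ A, a (i + 1) ≤ KA * a i)
    (hB : ∀ i ∈ B, a (i + 1) ≤ a i / 2)
    (hC : ∀ i ∈ C, a (i + 1) ≤ KC * a i) :
    #B * log 2 ≤ #A * log KA + #C * log KC + log (a 0) - log (a k) := by
  have hlt : ∀ i ∈ A ∪ B ∪ C, i < k := fun i hi => mem_range.mp (hpart ▸ hi)
  have rise_A := sum_log_increments_le_card_mul hpos
    (fun i hi => hlt i (by simp [hi])) hA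
  have rise_C := sum_log_increments_le_card_mul hpos
    (fun i hi => hlt i (by simp [hi])) hC
  have fall_B := sum_log_increments_le_card_mul (S := B) (K := 2⁻¹) hpos
    (fun i hi => hlt i (by simp [hi])) fun i hi => by linarith [hB i hi]
  have telescope : ∑ i ∈ range k, (log (a (i + 1)) - log (a i))
      = ∑ i ∈ A, (log (a (i + 1)) - log (a i)) + ∑ i ∈ B, (log (a (i + 1)) - log (a i))
        + ∑ i ∈ C, (log (a (i + 1)) - log (a i)) := by
    rw [← hpart, sum_union (disjoint_union_left.mpr ⟨hAC, hBC⟩), sum_union hAB]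
  rw [sum_range_sub (fun i => log (a i))] at telescope
  rw [log_inv] at fall_B
  linarith

end LogIncrements

theorem stmt_10_general {n : ℕ} (g : ℕ → EuclideanSpace ℝ (Fin n)) (k : ℕ)
    (ε KA KC : ℝ) (A B C : Finset ℕ)
    (hε : 0 < ε)
    (hg : ∀ i ≤ k, g i ≠ 0)
    (hAB : Disjoint A B) (hAC : Disjoint A C) (hBC : Disjoint B C)
    (hpart : A ∪ B ∪ C = Finset.range k)
    (hA : ∀ i ∈ A, ‖g (i + 1)‖ ≤ (KA / ε) * ‖g i‖)
    (hB : ∀ i ∈ B, ‖g (i + 1)‖ ≤ ‖g i‖ / 2)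
    (hC : ∀ i ∈ C, ‖g (i + 1)‖ ≤ (KC / ε) * ‖g i‖)
    (hterm : ε ≤ ‖g k‖) :
    (B.card : ℝ) ≤ (A.card / Real.log 2) * Real.log (KA / ε)
      + (C.card / Real.log 2) * Real.log (KC / ε)
      + (|Real.log ε| + Real.log ‖g 0‖) / Real.log 2 := by
  have count := card_mul_log_two_le (fun i hi => norm_pos_iff.mpr (hg i hi))
    hAB hAC hBC hpart hA hB hC
  have log_final : log ε ≤ log ‖g k‖ := log_le_log hε hterm
  have hlog2 : 0 < log 2 := log_pos one_lt_two
  rw [div_mul_eq_mul_div, div_mul_eq_mul_div, ← add_div, ← add_div, le_div_iff₀ hlog2]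
  linarith [neg_le_abs (log ε)]

/-- Bound on the number of gradient-halving steps in terms of the other step
types, for a sequence of nonzero gradients with controlled growth. -/
theorem stmt_10 {n : ℕ} (g : ℕ → EuclideanSpace ℝ (Fin n)) (k : ℕ)
    (ε KA KC : ℝ) (A B C : Finset ℕ)
    (hε : 0 < ε) (hε1 : ε ≤ 1) (hKA : 1 ≤ KA) (hKC : 1 ≤ KC)
    (hg : ∀ i ≤ k, g i ≠ 0)
    (hAB : Disjoint A B) (hAC : Disjoint A C) (hBC : Disjoint B C)
    (hpart : A ∪ B ∪ C = Finset.range k)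
    (hA : ∀ i ∈ A, ‖g (i + 1)‖ ≤ (KA / ε) * ‖g i‖)
    (hB : ∀ i ∈ B, ‖g (i + 1)‖ ≤ ‖g i‖ / 2)
    (hC : ∀ i ∈ C, ‖g (i + 1)‖ ≤ (KC / ε) * ‖g i‖)
    (hterm : ε ≤ ‖g k‖) :
    (B.card : ℝ) ≤ (A.card / Real.log 2) * Real.log (KA / ε)
      + (C.card / Real.log 2) * Real.log (KC / ε)
      + (|Real.log ε| + Real.log ‖g 0‖) / Real.log 2 :=
  stmt_10_general g k ε KA KC A B C hε hg hAB hAC hBC hpart hA hB hC hterm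
end

section
/- Let f : ℝⁿ → ℝ be C² satisfying ‖∇²f(y) − ∇²f(x)‖ ≤ (L₀ + L₁‖∇f(x)‖)‖x−y‖ for ‖x−y‖ ≤ δ. Let x with ‖∇f(x)‖ ≤ 1, H = ∇²f(x), σ ≥ σ_min > 0, and let u be a unit eigenvector of H for λ = λ_min(H) with ∇f(x)ᵀu ≤ 0. Set s = u/σ^{1/2} and suppose ‖s‖ ≤ δ. Then ‖∇f(x+s)‖ ≤ (L₀+L₁)/(2√(σ·σ_min)) + 1 + |λ|/σ^{1/2}. -/
/-!
Write `G = ∇f` and `H = ∇²f(x)`. Then `∇f(x + s) = ∇f(x) + H s + R` with the Taylor remainder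
`‖R‖ ≤ L ‖s‖² / 2`, `L = L₀ + L₁‖∇f(x)‖`, obtained by comparing `t ↦ G(x + t s) - G x - t H s`, whose
derivative has norm at most `L t ‖s‖²`, with `t ↦ L t² ‖s‖² / 2`. Since `u` is an eigenvector of
`H`, `‖H s‖ = |λ| / √σ`; the remainder is controlled by `‖∇f(x)‖ ≤ 1` and
`‖s‖² = 1/σ ≤ 1/√(σ σ_min)`.
-/

open Set

section TaylorRemainder

variable {E F : Type*} [NormedAddCommGroup E] [NormedSpace ℝ E]
  [NormedAddCommGroup F] [NormedSpace ℝ F]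

theorem norm_image_add_sub_sub_fderiv_le_s15 {G : E → F} (hG : Differentiable ℝ G) {x s : E} {L : ℝ}
    (hL : ∀ t ∈ Icc (0 : ℝ) 1, ‖fderiv ℝ G (x + t • s) - fderiv ℝ G x‖ ≤ L * (t * ‖s‖)) :
    ‖G (x + s) - G x - fderiv ℝ G x s‖ ≤ L * ‖s‖ ^ 2 / 2 := by
  have hpath (t : ℝ) : HasDerivAt (fun t : ℝ => x + t • s) s t := by
    simpa using ((hasDerivAt_id t).smul_const s).const_add x
  have hderiv (t : ℝ) : HasDerivAt (fun t : ℝ => G (x + t • s) - G x - t • fderiv ℝ G x s)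
      ((fderiv ℝ G (x + t • s) - fderiv ℝ G x) s) t := by
    refine ((((hG _).hasFDerivAt.comp_hasDerivAt t (hpath t)).sub_const (G x)).sub
      ((hasDerivAt_id t).smul_const (fderiv ℝ G x s))).congr_deriv ?_
    simp
  have hbound (t : ℝ) : HasDerivAt (fun t => L * ‖s‖ ^ 2 / 2 * t ^ 2) (L * ‖s‖ ^ 2 * t) t := by
    refine ((hasDerivAt_pow 2 t).const_mul (L * ‖s‖ ^ 2 / 2)).congr_deriv (by push_cast; ring)
  have hderiv_le : ∀ t ∈ Ico (0 : ℝ) 1,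
      ‖(fderiv ℝ G (x + t • s) - fderiv ℝ G x) s‖ ≤ L * ‖s‖ ^ 2 * t := fun t ht =>
    calc ‖(fderiv ℝ G (x + t • s) - fderiv ℝ G x) s‖
        ≤ ‖fderiv ℝ G (x + t • s) - fderiv ℝ G x‖ * ‖s‖ := ContinuousLinearMap.le_opNorm _ s
      _ ≤ L * (t * ‖s‖) * ‖s‖ := by gcongr; exact hL t (Ico_subset_Icc_self ht)
      _ = L * ‖s‖ ^ 2 * t := by ring
  simpa using image_norm_le_of_norm_deriv_right_le_deriv_boundary
    (fun t _ => (hderiv t).continuousAt.continuousWithinAt)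
    (fun t _ => (hderiv t).hasDerivWithinAt) (by simp) hbound hderiv_le
    (right_mem_Icc.2 zero_le_one)

theorem norm_image_add_sub_sub_fderiv_le_of_local_lipschitz {G : E → F}
    (hG : Differentiable ℝ G) {x s : E} {δ K : ℝ}
    (hK : ∀ y, ‖x - y‖ ≤ δ → ‖fderiv ℝ G y - fderiv ℝ G x‖ ≤ K * ‖x - y‖) (hs : ‖s‖ ≤ δ) :
    ‖G (x + s) - G x - fderiv ℝ G x s‖ ≤ K * ‖s‖ ^ 2 / 2 := by
  refine norm_image_add_sub_sub_fderiv_le_s15 hG fun t ht => ?_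
  have hdist : ‖x - (x + t • s)‖ = t * ‖s‖ := by
    simp [norm_smul, abs_of_nonneg ht.1]
  rw [← hdist]
  exact hK _ (by rw [hdist]; nlinarith [norm_nonneg s, ht.2])

end TaylorRemainder

theorem differentiable_gradient_of_contDiff_two {E : Type*} [NormedAddCommGroup E]
    [InnerProductSpace ℝ E] [CompleteSpace E] {f : E → ℝ} (hf : ContDiff ℝ 2 f) :
    Differentiable ℝ (gradient f) :=
  (InnerProductSpace.toDual ℝ E).symm.differentiable.comp
    ((hf.fderiv_right (m := 1) le_rfl).differentiable one_ne_zero)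

theorem div_two_mul_le_div_two_mul_sqrt_mul {c σ σmin : ℝ} (hc : 0 ≤ c) (hσmin : 0 < σmin)
    (hσ : σmin ≤ σ) : c / (2 * σ) ≤ c / (2 * √(σ * σmin)) := by
  have hσ0 : 0 < σ := hσmin.trans_le hσ
  have : √(σ * σmin) ≤ σ := (Real.sqrt_le_left hσ0.le).2 (by nlinarith)
  gcongr

theorem stmt_15_general {n : ℕ} (f : EuclideanSpace ℝ (Fin n) → ℝ)
    (hf : ContDiff ℝ 2 f) (L₀ L₁ δ : ℝ) (hL₀ : 0 ≤ L₀) (hL₁ : 0 ≤ L₁)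
    (hLip : ∀ x y : EuclideanSpace ℝ (Fin n), ‖x - y‖ ≤ δ →
      ‖fderiv ℝ (gradient f) y - fderiv ℝ (gradient f) x‖
        ≤ (L₀ + L₁ * ‖gradient f x‖) * ‖x - y‖)
    (x u s : EuclideanSpace ℝ (Fin n)) (σ σmin lam : ℝ)
    (hgsmall : ‖gradient f x‖ ≤ 1)
    (hσmin : 0 < σmin) (hσ : σmin ≤ σ)
    (heig : fderiv ℝ (gradient f) x u = lam • u) (hu : ‖u‖ = 1)
    (hs : s = (1 / Real.sqrt σ) • u) (hsδ : ‖s‖ ≤ δ) :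
    ‖gradient f (x + s)‖
      ≤ (L₀ + L₁) / (2 * Real.sqrt (σ * σmin)) + 1 + |lam| / Real.sqrt σ := by
  set G := gradient f
  set H := fderiv ℝ G x
  have hσ0 : 0 < σ := hσmin.trans_le hσ
  have hs_sq : ‖s‖ ^ 2 = 1 / σ := by
    rw [hs, norm_smul, hu, mul_one, Real.norm_eq_abs, abs_of_pos (by positivity), div_pow,
      Real.sq_sqrt hσ0.le, one_pow]
  have hHs : ‖H s‖ = |lam| / √σ := by
    rw [hs, map_smul, heig, norm_smul, norm_smul, hu, Real.norm_eq_abs, Real.norm_eq_abs,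
      abs_of_pos (by positivity : (0 : ℝ) < 1 / √σ)]
    ring
  have hrem : ‖G (x + s) - G x - H s‖ ≤ (L₀ + L₁) / (2 * √(σ * σmin)) :=
    calc ‖G (x + s) - G x - H s‖ ≤ (L₀ + L₁ * ‖G x‖) * ‖s‖ ^ 2 / 2 :=
          norm_image_add_sub_sub_fderiv_le_of_local_lipschitz
            (differentiable_gradient_of_contDiff_two hf) (hLip x) hsδ
      _ = (L₀ + L₁ * ‖G x‖) / (2 * σ) := by rw [hs_sq]; ring
      _ ≤ (L₀ + L₁) / (2 * σ) := by gcongr; nlinarith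
      _ ≤ (L₀ + L₁) / (2 * √(σ * σmin)) :=
          div_two_mul_le_div_two_mul_sqrt_mul (by positivity) hσmin hσ
  calc ‖G (x + s)‖ = ‖(G (x + s) - G x - H s) + G x + H s‖ := by abel_nf
    _ ≤ ‖G (x + s) - G x - H s‖ + ‖G x‖ + ‖H s‖ := norm_add₃_le
    _ ≤ (L₀ + L₁) / (2 * √(σ * σmin)) + 1 + |lam| / √σ := by rw [hHs]; gcongr

/-- Bound on the gradient norm after the second-order negative curvature step,
under the local Hessian Lipschitz condition (`lam` denotes `λ_min(∇²f(x))`). -/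
theorem stmt_15 {n : ℕ} (f : EuclideanSpace ℝ (Fin n) → ℝ)
    (hf : ContDiff ℝ 2 f) (L₀ L₁ δ : ℝ) (hL₀ : 0 ≤ L₀) (hL₁ : 0 ≤ L₁) (hδ : 0 < δ)
    (hLip : ∀ x y : EuclideanSpace ℝ (Fin n), ‖x - y‖ ≤ δ →
      ‖fderiv ℝ (gradient f) y - fderiv ℝ (gradient f) x‖
        ≤ (L₀ + L₁ * ‖gradient f x‖) * ‖x - y‖)
    (x u s : EuclideanSpace ℝ (Fin n)) (σ σmin lam : ℝ)
    (hgsmall : ‖gradient f x‖ ≤ 1)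
    (hσmin : 0 < σmin) (hσ : σmin ≤ σ)
    (hmin : ∀ w : EuclideanSpace ℝ (Fin n), ‖w‖ = 1 →
      lam ≤ (inner ℝ w (fderiv ℝ (gradient f) x w) : ℝ))
    (heig : fderiv ℝ (gradient f) x u = lam • u) (hu : ‖u‖ = 1)
    (hgu : (inner ℝ (gradient f x) u : ℝ) ≤ 0)
    (hs : s = (1 / Real.sqrt σ) • u) (hsδ : ‖s‖ ≤ δ) :
    ‖gradient f (x + s)‖
      ≤ (L₀ + L₁) / (2 * Real.sqrt (σ * σmin)) + 1 + |lam| / Real.sqrt σ :=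
  stmt_15_general f hf L₀ L₁ δ hL₀ hL₁ hLip x u s σ σmin lam hgsmall hσmin hσ heig hu hs hsδ
end
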